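/- arXiv:2512.02316 — 2 statements merged into one kernel-verified Lean document; each statement's English description precedes it below -/
import Mathlib

section
/- Let Ω ∈ R^{N×m}, A ∈ R^{N×N}, and let U be an orthogonal m×m matrix with last column u. Then the column space of [(AΩU)_{−m}, (ΩU)_{−m}] equals the column space of [AΩ(I − uu^T), Ω(I − uu^T)]; in particular it depends on U only through u. -/
/-!
With `e` the last standard basis vector, orthogonality of `U` gives
`1 - u uᵀ = U (1 - e eᵀ) Uᵀ`. Right multiplication by the invertible `Uᵀ` does not change a
column space, and `X (1 - e eᵀ)` is `X` with its last column replaced by zero, whose column space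
is that of `X_{−m}`. Apply this to `X = AΩU` and `X = ΩU`.
-/

open Matrix

namespace Matrix

variable {R : Type*}

lemma col_fromCols {m n₁ n₂ : Type*} (X : Matrix m n₁ R) (Y : Matrix m n₂ R) :
    (fromCols X Y).col = Sum.elim X.col Y.col := by
  ext (j | j) i <;> rfl

lemma range_toLin'_fromCols [CommSemiring R] {m n₁ n₂ : Type*} [Fintype n₁] [Fintype n₂]
    [DecidableEq n₁] [DecidableEq n₂] (X : Matrix m n₁ R) (Y : Matrix m n₂ R) :
    LinearMap.range (toLin' (fromCols X Y))
      = LinearMap.range (toLin' X) ⊔ LinearMap.range (toLin' Y) := by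
  simp only [range_toLin', col_fromCols, Set.Sum.elim_range, Submodule.span_union]

lemma range_toLin'_mul_of_mul_eq_one [CommSemiring R] {m n k : Type*} [Fintype n] [Fintype k]
    [DecidableEq n] [DecidableEq k] (M : Matrix m n R) {P : Matrix n k R} {Q : Matrix k n R}
    (hPQ : P * Q = 1) :
    LinearMap.range (toLin' (M * P)) = LinearMap.range (toLin' M) := by
  have hP : Function.Surjective (toLin' P) := fun y =>
    ⟨toLin' Q y, by
      rw [← LinearMap.comp_apply, ← toLin'_mul, hPQ, toLin'_one, LinearMap.id_apply]⟩
  rw [toLin'_mul, LinearMap.range_comp, LinearMap.range_eq_top.mpr hP, Submodule.map_top]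

lemma transpose_mul_one_submatrix_castSucc [CommSemiring R] (m : ℕ) :
    ((1 : Matrix (Fin (m + 1)) (Fin (m + 1)) R).submatrix id Fin.castSucc)ᵀ
      * (1 : Matrix (Fin (m + 1)) (Fin (m + 1)) R).submatrix id Fin.castSucc = 1 := by
  ext i j
  simp [mul_apply, one_apply]

lemma one_submatrix_castSucc_mul_transpose [CommRing R] (m : ℕ) :
    (1 : Matrix (Fin (m + 1)) (Fin (m + 1)) R).submatrix id Fin.castSucc
      * ((1 : Matrix (Fin (m + 1)) (Fin (m + 1)) R).submatrix id Fin.castSucc)ᵀ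
      = 1 - vecMulVec (Pi.single (Fin.last m) 1) (Pi.single (Fin.last m) 1) := by
  ext i j
  induction j using Fin.lastCases <;>
    simp [mul_apply, one_apply, vecMulVec_apply, Pi.single_apply, Fin.castSucc_ne_last, eq_comm]

lemma range_toLin'_submatrix_castSucc [CommRing R] {l : Type*} {m : ℕ}
    (M : Matrix l (Fin (m + 1)) R) :
    LinearMap.range (toLin' (M.submatrix id Fin.castSucc))
      = LinearMap.range (toLin' (M * (1 - vecMulVec (Pi.single (Fin.last m) (1 : R))
          (Pi.single (Fin.last m) 1)))) := by
  have hM : M.submatrix id Fin.castSucc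
      = M * (1 : Matrix (Fin (m + 1)) (Fin (m + 1)) R).submatrix id Fin.castSucc :=
    (mul_submatrix_one (Equiv.refl _) Fin.castSucc M).symm
  rw [← one_submatrix_castSucc_mul_transpose m, ← Matrix.mul_assoc, ← hM,
    range_toLin'_mul_of_mul_eq_one _ (transpose_mul_one_submatrix_castSucc m)]

lemma orthogonal_mul_one_sub_vecMulVec_mul_transpose [CommRing R] {n : Type*} [Fintype n]
    [DecidableEq n] {U : Matrix n n R} (hU : U ∈ orthogonalGroup n R) (v : n → R) :
    U * (1 - vecMulVec v v) * Uᵀ = 1 - vecMulVec (U *ᵥ v) (U *ᵥ v) := by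
  rw [Matrix.mul_sub, Matrix.sub_mul, Matrix.mul_one, (mem_orthogonalGroup_iff n R).mp hU,
    mul_vecMulVec, vecMulVec_mul, vecMul_transpose]

lemma range_toLin'_mul_orthogonal_submatrix_castSucc [CommRing R] {l : Type*} {m : ℕ}
    (M : Matrix l (Fin (m + 1)) R) {U : Matrix (Fin (m + 1)) (Fin (m + 1)) R}
    (hU : U ∈ orthogonalGroup (Fin (m + 1)) R) :
    LinearMap.range (toLin' ((M * U).submatrix id Fin.castSucc))
      = LinearMap.range
          (toLin' (M * (1 - vecMulVec (U.col (Fin.last m)) (U.col (Fin.last m))))) := by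
  rw [range_toLin'_submatrix_castSucc, ← mulVec_single_one,
    ← orthogonal_mul_one_sub_vecMulVec_mul_transpose hU, ← Matrix.mul_assoc,
    ← Matrix.mul_assoc,
    range_toLin'_mul_of_mul_eq_one _ ((mem_orthogonalGroup_iff' _ R).mp hU), Matrix.mul_assoc]

end Matrix

/-- The column space of `[(AΩU)_{−m}, (ΩU)_{−m}]` equals the column space of
`[AΩ(I − u uᵀ), Ω(I − u uᵀ)]`, where `u` is the last column of the orthogonal matrix `U`;
in particular it depends on `U` only through `u`. -/
theorem colspace_leaveOneOutFull_depends_on_last_column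
    {N m : ℕ} (A : Matrix (Fin N) (Fin N) ℝ)
    (Ω : Matrix (Fin N) (Fin (m + 1)) ℝ)
    (U : Matrix (Fin (m + 1)) (Fin (m + 1)) ℝ)
    (hU : U ∈ Matrix.orthogonalGroup (Fin (m + 1)) ℝ)
    (u : Fin (m + 1) → ℝ) (hu : u = fun i => U i (Fin.last m)) :
    LinearMap.range (Matrix.toLin' (Matrix.fromCols
        ((A * Ω * U).submatrix id (Fin.castSucc : Fin m → Fin (m + 1)))
        ((Ω * U).submatrix id (Fin.castSucc : Fin m → Fin (m + 1)))))
      = LinearMap.range (Matrix.toLin' (Matrix.fromCols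
        (A * Ω * (1 - vecMulVec u u))
        (Ω * (1 - vecMulVec u u)))) := by
  subst hu
  rw [range_toLin'_fromCols, range_toLin'_fromCols,
    range_toLin'_mul_orthogonal_submatrix_castSucc _ hU,
    range_toLin'_mul_orthogonal_submatrix_castSucc _ hU]
  rfl
end

section
/- Let A ∈ R^{N×N} be symmetric and let Ω ∈ R^{N×m}. If the column space of [Ω, AΩ] contains all eigenvectors of A corresponding to eigenvalues different from some value λ₀, and Q is an orthonormal basis for a subspace containing the span of those eigenvectors, then tr(A) = tr(Q^T A Q) + λ₀ (N − rank(Q)) when the orthogonal complement of R(Q) lies in the λ₀-eigenspace. -/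
open Matrix

/-- If the orthogonal complement of `R(Q)` lies in the `λ₀`-eigenspace of the symmetric
matrix `A`, i.e. `(I − QQᵀ) A = λ₀ (I − QQᵀ)`, then
`tr A = tr(Qᵀ A Q) + λ₀ (N − rank Q)`. -/
theorem trace_exact_of_residual_eigenspace
    {N k : ℕ} (A : Matrix (Fin N) (Fin N) ℝ) (hA : A.IsSymm)
    (lam₀ : ℝ)
    (Q : Matrix (Fin N) (Fin k) ℝ) (hQ : Qᵀ * Q = 1)
    (hres : (1 - Q * Qᵀ) * A = lam₀ • (1 - Q * Qᵀ)) :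
    A.trace = (Qᵀ * A * Q).trace + lam₀ * ((N : ℝ) - (Q.rank : ℝ)) := by
  have hrank : Q.rank = k := by
    have := Matrix.rank_transpose_mul_self Q
    rw [hQ, Matrix.rank_one] at this
    simpa using this.symm
  have htrQ : (Q * Qᵀ).trace = (k : ℝ) := by
    rw [Matrix.trace_mul_comm, hQ, Matrix.trace_one]
    simp
  have htr := congrArg Matrix.trace hres
  rw [Matrix.sub_mul, Matrix.one_mul, Matrix.trace_sub, Matrix.trace_smul,
    Matrix.trace_sub, Matrix.trace_one, htrQ] at htr
  have hcomm : (Q * Qᵀ * A).trace = (Qᵀ * A * Q).trace := by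
    rw [Matrix.mul_assoc, Matrix.trace_mul_comm, Matrix.mul_assoc]
  rw [hcomm] at htr
  rw [hrank]
  simp only [smul_eq_mul] at htr
  simp at htr ⊢
  linarith
end
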